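/- Let L be a finite-dimensional complex Lie algebra, let 𝒢₁ and 𝒢₂ be MAD-groups in Aut L, and let Γ₁ = Gr(𝒢₁) and Γ₂ = Gr(𝒢₂) be the fine group gradings of L they generate. Then Γ₁ and Γ₂ are equivalent if and only if 𝒢₁ and 𝒢₂ are conjugate in Aut L. -/

import Mathlib

/-!
A MAD-group `𝒢` is recovered from its grading: its elements commute and are diagonalizable, so in
finite dimension the simultaneous eigenspaces span `L`, and by maximality `𝒢` consists exactly of
the diagonalizable automorphisms acting by a scalar on every component of `Gr(𝒢)`. Conjugating by
`h` carries `𝒢` to a MAD-group whose grading is the image of `Gr(𝒢)` under `h`. Hence an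
equivalence `h` of `Gr(𝒢₁)` with `Gr(𝒢₂)` forces `h 𝒢₁ h⁻¹ = 𝒢₂`, and conversely.
-/

/-- The eigenspace of a Lie algebra automorphism `g` for the eigenvalue `μ`. -/
def eig {L : Type} [LieRing L] [LieAlgebra ℂ L] (g : L ≃ₗ⁅ℂ⁆ L) (μ : ℂ) :
    Submodule ℂ L where
  carrier := {x | g x = μ • x}
  add_mem' := by
    intro a b ha hb
    simp only [Set.mem_setOf_eq] at *
    rw [show g (a + b) = g a + g b from g.toLinearEquiv.map_add a b, ha, hb, smul_add]
  zero_mem' := by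
    show g 0 = μ • 0
    rw [show g 0 = 0 from g.toLinearEquiv.map_zero, smul_zero]
  smul_mem' := by
    intro c x hx
    simp only [Set.mem_setOf_eq] at *
    rw [show g (c • x) = c • g x from g.toLinearEquiv.map_smul c x, hx, smul_comm]

/-- An automorphism is diagonalizable when `L` is the direct sum of its eigenspaces. -/
def IsDiagonalizable {L : Type} [LieRing L] [LieAlgebra ℂ L] (g : L ≃ₗ⁅ℂ⁆ L) : Prop :=
  iSupIndep (fun μ : ℂ => eig g μ) ∧ (⨆ μ : ℂ, eig g μ) = ⊤

/-- A MAD-group in `Aut L`. -/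
def IsMAD {L : Type} [LieRing L] [LieAlgebra ℂ L] (𝒢 : Set (L ≃ₗ⁅ℂ⁆ L)) : Prop :=
  (∀ f ∈ 𝒢, IsDiagonalizable f) ∧
  (∀ f ∈ 𝒢, ∀ f' ∈ 𝒢, ∀ x : L, f (f' x) = f' (f x)) ∧
  (∀ h : L ≃ₗ⁅ℂ⁆ L, IsDiagonalizable h → (∀ f ∈ 𝒢, ∀ x : L, h (f x) = f (h x)) → h ∈ 𝒢)

/-- Conjugation of an automorphism: `conjAut h g = h ∘ g ∘ h⁻¹`. -/
def conjAut {L : Type} [LieRing L] [LieAlgebra ℂ L] (h g : L ≃ₗ⁅ℂ⁆ L) : L ≃ₗ⁅ℂ⁆ L :=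
  (h.symm.trans g).trans h

/-- `Gr(𝒢)`: the set of nonzero simultaneous eigenspaces of a set `𝒢` of automorphisms. -/
def GrSet {L : Type} [LieRing L] [LieAlgebra ℂ L] (𝒢 : Set (L ≃ₗ⁅ℂ⁆ L)) :
    Set (Submodule ℂ L) :=
  {V | V ≠ ⊥ ∧ ∃ lam : 𝒢 → ℂ, V = ⨅ f : 𝒢, eig f.1 (lam f)}

namespace Module.End

theorem maxGenEigenspace_eq_eigenspace_of_iSup_eigenspace_eq_top {R M : Type*} [CommRing R]
    [IsDomain R] [AddCommGroup M] [Module R M] [IsTorsionFree R M] {f : End R M}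
    (hf : ⨆ μ, f.eigenspace μ = ⊤) (μ : R) : f.maxGenEigenspace μ = f.eigenspace μ := by
  have hdisj : Disjoint (f.maxGenEigenspace μ) (⨆ ν ≠ μ, f.eigenspace ν) :=
    (f.independent_maxGenEigenspace μ).mono_right
      (iSup₂_mono fun _ _ => eigenspace_le_maxGenEigenspace)
  calc f.maxGenEigenspace μ
      = (f.eigenspace μ ⊔ ⨆ ν ≠ μ, f.eigenspace ν) ⊓ f.maxGenEigenspace μ := by
        rw [← iSup_split_single, hf, top_inf_eq]
    _ = f.eigenspace μ := by
        rw [sup_inf_assoc_of_le _ eigenspace_le_maxGenEigenspace, inf_comm, hdisj.eq_bot,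
          sup_bot_eq]

theorem iSup_iInf_eigenspace_eq_top_of_iSup_eigenspace_eq_top_of_commute
    {K M ι : Type*} [Field K] [AddCommGroup M] [Module K M] [FiniteDimensional K M]
    (f : ι → End K M)
    (h : Pairwise fun i j ↦ Commute (f i) (f j)) (h' : ∀ i, ⨆ μ, (f i).eigenspace μ = ⊤) :
    ⨆ χ : ι → K, ⨅ i, (f i).eigenspace (χ i) = ⊤ := by
  simp_rw [← maxGenEigenspace_eq_eigenspace_of_iSup_eigenspace_eq_top (h' _)] at h' ⊢
  exact iSup_iInf_maxGenEigenspace_eq_top_of_iSup_maxGenEigenspace_eq_top_of_commute f h h'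

end Module.End

variable {L : Type} [LieRing L] [LieAlgebra ℂ L]

theorem mem_eig {g : L ≃ₗ⁅ℂ⁆ L} {μ : ℂ} {x : L} : x ∈ eig g μ ↔ g x = μ • x := Iff.rfl

theorem eig_eq_eigenspace (g : L ≃ₗ⁅ℂ⁆ L) (μ : ℂ) :
    eig g μ = Module.End.eigenspace (g : L →ₗ[ℂ] L) μ := by
  ext x
  rw [mem_eig, Module.End.mem_eigenspace_iff]
  rfl

theorem isDiagonalizable_iff {g : L ≃ₗ⁅ℂ⁆ L} :
    IsDiagonalizable g ↔ ⨆ μ, Module.End.eigenspace (g : L →ₗ[ℂ] L) μ = ⊤ := by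
  simp only [IsDiagonalizable, eig_eq_eigenspace, Module.End.eigenspaces_iSupIndep, true_and]

theorem iSup_iInf_eig_eq_top [FiniteDimensional ℂ L] {𝒢 : Set (L ≃ₗ⁅ℂ⁆ L)}
    (hdiag : ∀ f ∈ 𝒢, IsDiagonalizable f) (hcomm : ∀ f ∈ 𝒢, ∀ f' ∈ 𝒢, ∀ x, f (f' x) = f' (f x)) :
    ⨆ lam : 𝒢 → ℂ, ⨅ f : 𝒢, eig f.1 (lam f) = ⊤ := by
  simp_rw [eig_eq_eigenspace]
  exact Module.End.iSup_iInf_eigenspace_eq_top_of_iSup_eigenspace_eq_top_of_commute _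
    (fun f f' _ => LinearMap.ext (hcomm f.1 f.2 f'.1 f'.2))
    (fun f => isDiagonalizable_iff.mp (hdiag f.1 f.2))

theorem IsMAD.mem_iff [FiniteDimensional ℂ L] {𝒢 : Set (L ≃ₗ⁅ℂ⁆ L)} (h𝒢 : IsMAD 𝒢)
    {g : L ≃ₗ⁅ℂ⁆ L} : g ∈ 𝒢 ↔ IsDiagonalizable g ∧ ∀ V ∈ GrSet 𝒢, ∃ μ, V ≤ eig g μ := by
  refine ⟨fun hg => ⟨h𝒢.1 g hg, ?_⟩, fun ⟨hdiag, hscalar⟩ => h𝒢.2.2 g hdiag fun f hf => ?_⟩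
  · rintro V ⟨-, lam, rfl⟩
    exact ⟨lam ⟨g, hg⟩, iInf_le (fun f : 𝒢 => eig f.1 (lam f)) ⟨g, hg⟩⟩
  -- `g` and `f` act by scalars on each simultaneous eigenspace of `𝒢`, and these span `L`.
  suffices ⊤ ≤ LinearMap.eqLocus ((g : L →ₗ[ℂ] L) ∘ₗ (f : L →ₗ[ℂ] L))
      ((f : L →ₗ[ℂ] L) ∘ₗ (g : L →ₗ[ℂ] L)) from fun x => this Submodule.mem_top
  rw [← iSup_iInf_eig_eq_top h𝒢.1 h𝒢.2.1]
  refine iSup_le fun lam => ?_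
  rcases eq_or_ne (⨅ f' : 𝒢, eig f'.1 (lam f')) ⊥ with hbot | hbot
  · exact hbot ▸ bot_le
  obtain ⟨μ, hμ⟩ := hscalar _ ⟨hbot, lam, rfl⟩
  intro y hy
  have hfy : f y = lam ⟨f, hf⟩ • y := iInf_le (fun f' : 𝒢 => eig f'.1 (lam f')) ⟨f, hf⟩ hy
  have hgy : g y = μ • y := hμ hy
  simp only [LinearMap.mem_eqLocus, LinearMap.comp_apply, LinearEquiv.coe_coe,
    LieEquiv.coe_toLinearEquiv]
  rw [hfy, hgy, map_smul, map_smul, hfy, hgy, smul_comm]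

theorem IsMAD.eq_of_grSet_eq [FiniteDimensional ℂ L] {𝒢 𝒢' : Set (L ≃ₗ⁅ℂ⁆ L)} (h𝒢 : IsMAD 𝒢)
    (h𝒢' : IsMAD 𝒢') (hGr : GrSet 𝒢 = GrSet 𝒢') : 𝒢 = 𝒢' :=
  Set.ext fun _ => by rw [h𝒢.mem_iff, h𝒢'.mem_iff, hGr]

section Conjugation

variable (h : L ≃ₗ⁅ℂ⁆ L)

@[simp]
theorem conjAut_apply (g : L ≃ₗ⁅ℂ⁆ L) (x : L) : conjAut h g x = h (g (h.symm x)) := rfl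

@[simp]
theorem conjAut_symm_conjAut (g : L ≃ₗ⁅ℂ⁆ L) : conjAut h.symm (conjAut h g) = g := by
  ext x
  simp

theorem conjAut_conjAut_symm (g : L ≃ₗ⁅ℂ⁆ L) : conjAut h (conjAut h.symm g) = g := by
  simpa using conjAut_symm_conjAut h.symm g

theorem conjAut_injective : Function.Injective (conjAut h) :=
  Function.LeftInverse.injective (conjAut_symm_conjAut h)

theorem eig_conjAut (g : L ≃ₗ⁅ℂ⁆ L) (μ : ℂ) :
    eig (conjAut h g) μ = (eig g μ).map (h : L →ₗ[ℂ] L) := by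
  ext x
  rw [Submodule.mem_map_equiv, mem_eig, mem_eig, conjAut_apply, ← LieEquiv.eq_symm_apply,
    map_smul]
  rfl

theorem IsDiagonalizable.conjAut {g : L ≃ₗ⁅ℂ⁆ L} (hg : IsDiagonalizable g) :
    IsDiagonalizable (conjAut h g) := by
  rw [isDiagonalizable_iff, ← funext (eig_eq_eigenspace _)] at hg ⊢
  simp_rw [eig_conjAut, ← Submodule.map_iSup, hg, Submodule.map_top, LinearEquiv.range]

theorem IsMAD.image_conjAut {𝒢 : Set (L ≃ₗ⁅ℂ⁆ L)} (h𝒢 : IsMAD 𝒢) : IsMAD (conjAut h '' 𝒢) := by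
  refine ⟨?_, ?_, fun g hdiag hcomm => ⟨conjAut h.symm g, h𝒢.2.2 _ (hdiag.conjAut h.symm) ?_,
    conjAut_conjAut_symm h g⟩⟩
  · rintro _ ⟨f, hf, rfl⟩
    exact (h𝒢.1 f hf).conjAut h
  · rintro _ ⟨f, hf, rfl⟩ _ ⟨f', hf', rfl⟩ x
    simp [h𝒢.2.1 f hf f' hf']
  · intro f hf x
    simpa using congrArg h.symm (hcomm _ ⟨f, hf, rfl⟩ (h x))

theorem grSet_image_conjAut (𝒢 : Set (L ≃ₗ⁅ℂ⁆ L)) :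
    GrSet (conjAut h '' 𝒢) = (fun V => V.map (h : L →ₗ[ℂ] L)) '' GrSet 𝒢 := by
  set σ : 𝒢 ≃ conjAut h '' 𝒢 := Equiv.Set.image (conjAut h) 𝒢 (conjAut_injective h)
  have hmap (lam : conjAut h '' 𝒢 → ℂ) :
      (⨅ f : 𝒢, eig f.1 (lam (σ f))).map (h : L →ₗ[ℂ] L) = ⨅ f, eig f.1 (lam f) := by
    rw [← σ.iInf_comp]
    exact ((Submodule.orderIsoMapComap h.toLinearEquiv).map_iInf _).trans
      (iInf_congr fun f => (eig_conjAut h f.1 _).symm)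
  ext W
  constructor
  · rintro ⟨hW, lam, rfl⟩
    refine ⟨_, ⟨fun hbot => hW ?_, fun f => lam (σ f), rfl⟩, hmap lam⟩
    rw [← hmap, hbot, Submodule.map_bot]
  · rintro ⟨V, ⟨hV, lam, rfl⟩, rfl⟩
    refine ⟨by simpa using hV, fun f => lam (σ.symm f), ?_⟩
    simp_rw [← hmap, Equiv.symm_apply_apply]

end Conjugation

/-- for MAD-groups `𝒢₁`, `𝒢₂` in `Aut L` of a finite-dimensional complex Lie
algebra `L`, the fine group gradings `Γ₁ = Gr(𝒢₁)` and `Γ₂ = Gr(𝒢₂)` are equivalent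
(some automorphism of `L` maps the grading subspaces of `Γ₁` bijectively onto those of
`Γ₂`) if and only if `𝒢₁` and `𝒢₂` are conjugate in `Aut L`. -/
theorem statement7 (L : Type) [LieRing L] [LieAlgebra ℂ L] [FiniteDimensional ℂ L]
    (𝒢₁ 𝒢₂ : Set (L ≃ₗ⁅ℂ⁆ L)) (h₁ : IsMAD 𝒢₁) (h₂ : IsMAD 𝒢₂) :
    (∃ h : L ≃ₗ⁅ℂ⁆ L,
      (fun V => Submodule.map (h.toLinearEquiv : L →ₗ[ℂ] L) V) '' GrSet 𝒢₁ = GrSet 𝒢₂) ↔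
    (∃ h : L ≃ₗ⁅ℂ⁆ L, conjAut h '' 𝒢₁ = 𝒢₂) := by
  refine ⟨fun ⟨h, hGr⟩ => ⟨h, ?_⟩, fun ⟨h, hconj⟩ => ⟨h, ?_⟩⟩
  · exact (h₁.image_conjAut h).eq_of_grSet_eq h₂ (by rw [grSet_image_conjAut, hGr])
  · rw [← hconj, grSet_image_conjAut]
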